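/- Let T be a semi-standard skew tableau and p a partition. Then the reverse reading word of T is p-dominant if and only if the reverse column word of T is p-dominant. -/

import Mathlib

/-- A word in the positive integers (a list of naturals, each `≥ 1`) is a ballot
sequence if for every `j ≥ 1` and every prefix, the number of occurrences of `j` is at
least the number of occurrences of `j + 1`. -/
def IsBallot (w : List ℕ) : Prop :=
  ∀ t : List ℕ, t <+: w → ∀ j : ℕ, 1 ≤ j → t.count (j + 1) ≤ t.count j

/-- A partition, recorded as a weakly decreasing, eventually zero sequence of
non-negative integers `p 0 ≥ p 1 ≥ ⋯` (so `p i` is the `(i+1)`-st part). -/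
def IsPartitionFun (p : ℕ → ℕ) : Prop :=
  (∀ i j : ℕ, i ≤ j → p j ≤ p i) ∧ ∃ N : ℕ, ∀ n : ℕ, N ≤ n → p n = 0

/-- The word `w(p)` of a partition `p`: `p 0` ones, followed by `p 1` twos, etc.
(computed using any bound `N` beyond the support of `p`). -/
def partitionWord (p : ℕ → ℕ) (N : ℕ) : List ℕ :=
  (List.range N).flatMap fun i => List.replicate (p i) (i + 1)

/-- A word `w` is `p`-dominant if `w(p) ++ w` is a ballot sequence. -/
def IsDominant (p : ℕ → ℕ) (w : List ℕ) : Prop :=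
  ∀ N : ℕ, (∀ n : ℕ, N ≤ n → p n = 0) → IsBallot (partitionWord p N ++ w)

/-- The cell in row `i`, column `j` (both 0-indexed) belongs to the skew shape
`ν/λ`. -/
def InSkewShape (la nu : ℕ → ℕ) (i j : ℕ) : Prop :=
  la i ≤ j ∧ j < nu i

/-- `T` is a semi-standard skew tableau of shape `ν/λ`: it fills the cells of `ν/λ`
with positive integers, weakly increasing along each row (left to right) and strictly
increasing down each column. -/
def IsSSST (la nu : ℕ → ℕ) (T : ℕ → ℕ → ℕ) : Prop :=
  (∀ i j : ℕ, InSkewShape la nu i j → 1 ≤ T i j) ∧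
  (∀ i j k : ℕ, InSkewShape la nu i j → InSkewShape la nu i k → j ≤ k → T i j ≤ T i k) ∧
  (∀ i j : ℕ, InSkewShape la nu i j → InSkewShape la nu (i + 1) j → T i j < T (i + 1) j)

/-- The reverse reading word of a skew tableau: read each row from right to left,
scanning the rows from top to bottom (`R` is a bound on the number of rows). -/
def revReadingWord (la nu : ℕ → ℕ) (T : ℕ → ℕ → ℕ) (R : ℕ) : List ℕ :=
  (List.range R).flatMap fun i =>
    (((List.range (nu i)).filter fun j => decide (la i ≤ j)).map fun j => T i j).reverse

/-- The reverse column word of a skew tableau: read each column from top to bottom,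
scanning the columns from right to left (`R` bounds the number of rows, `C` the number
of columns). -/
def revColumnWord (la nu : ℕ → ℕ) (T : ℕ → ℕ → ℕ) (R C : ℕ) : List ℕ :=
  ((List.range C).reverse).flatMap fun j =>
    ((List.range R).filter fun i => decide (la i ≤ j ∧ j < nu i)).map fun i => T i j

/-
Both words are read off the same cells in two orders, and `p`-dominance only has to be checked at
each occurrence of a letter `k + 2`, comparing the numbers of letters `k + 1` and `k + 2` read
before it. Entries weakly right and strictly below a cell are larger, so before a cell `x` of
value `k + 2` the row order reads no more `k + 2`'s and no fewer `k + 1`'s than the column order: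
the column condition at `x` gives the row condition at `x`. Conversely, for `x = (i, j)` let
`(i, a)` be the leftmost `k + 2` of row `i`. Compared with the column order at `x`, the row order
at `(i, a)` reads the `j - a` extra letters `k + 2` at `(i, a + 1), …, (i, j)`, and at most `j - a`
extra letters `k + 1`, at most one in each column `a, …, j - 1` (none further west, by minimality
of `a`); so the row condition at `(i, a)` gives the column condition at `x`.
-/

namespace SkewTableau

open Finset

section Words

theorem forall_prefix_count_le_iff {x y a b : ℕ} (hxy : x ≠ y) {w : List ℕ} :
    (∀ t, t <+: w → t.count x + a ≤ t.count y + b) ↔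
      a ≤ b ∧ ∀ t r, w = t ++ x :: r → t.count x + 1 + a ≤ t.count y + b := by
  constructor
  · intro h
    refine ⟨by simpa using h [] (List.nil_prefix), fun t r hw => ?_⟩
    simpa [List.count_append, hxy] using h (t ++ [x]) ⟨r, by simp [hw]⟩
  · rintro ⟨hab, hocc⟩ t ht
    induction t using List.reverseRecOn with
    | nil => simpa using hab
    | append_singleton t c ih =>
      have hle := ih ((List.prefix_append t [c]).trans ht)
      obtain ⟨r, hr⟩ := ht
      by_cases hc : c = x
      · subst hc
        simpa [List.count_append, hxy] using hocc t r (by simp [← hr])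
      · have hx : (t ++ [c]).count x = t.count x := by simp [List.count_append, hc]
        have hy : t.count y ≤ (t ++ [c]).count y := by simp [List.count_append]
        omega

theorem count_partitionWord_succ (p : ℕ → ℕ) (N i : ℕ) :
    (partitionWord p N).count (i + 1) = if i < N then p i else 0 := by
  induction N with
  | zero => simp [partitionWord]
  | succ N ih =>
    rw [partitionWord] at ih
    rw [partitionWord, List.range_succ, List.flatMap_append, List.count_append, ih]
    simp only [List.flatMap_singleton, List.count_replicate, beq_iff_eq]
    rcases lt_trichotomy i N with h | rfl | h
    · simp [h, h.trans (Nat.lt_succ_self N), h.ne']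
    · simp
    · simp [h.ne, h.not_gt, show ¬ i < N + 1 by omega]

theorem isBallot_partitionWord {p : ℕ → ℕ} (hp : Antitone p) (N : ℕ) :
    IsBallot (partitionWord p N) := by
  induction N with
  | zero => simp [IsBallot, partitionWord]
  | succ N ih =>
    have hpw : partitionWord p (N + 1) = partitionWord p N ++ List.replicate (p N) (N + 1) := by
      simp [partitionWord, List.range_succ]
    intro t ht j hj
    rw [hpw] at ht
    rcases List.prefix_or_prefix_of_prefix ht (List.prefix_append _ _) with ht' | ht'
    · exact ih t ht' j hj
    obtain ⟨s, rfl⟩ := List.prefix_iff_exists_eq_append.mp ht'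
    obtain ⟨hs, hs'⟩ := List.prefix_replicate_iff.mp ((List.prefix_append_right_inj _).mp ht)
    rw [hs']
    obtain ⟨i, rfl⟩ : ∃ i, j = i + 1 := ⟨j - 1, by omega⟩
    have := hp (show i ≤ i + 1 by omega)
    simp only [List.count_append, count_partitionWord_succ, List.count_replicate, beq_iff_eq]
    rcases eq_or_ne N (i + 1) with rfl | hN <;> split_ifs <;> omega

theorem isDominant_iff_forall_prefix {p : ℕ → ℕ} (hp : IsPartitionFun p) {w : List ℕ} :
    IsDominant p w ↔ ∀ k t, t <+: w → t.count (k + 2) + p (k + 1) ≤ t.count (k + 1) + p k := by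
  have hcount : ∀ {N}, (∀ n, N ≤ n → p n = 0) → ∀ i,
      (partitionWord p N).count (i + 1) = p i := fun hN i => by
    rw [count_partitionWord_succ]; split_ifs with h
    · rfl
    · exact (hN i (not_lt.mp h)).symm
  constructor
  · intro h k t ht
    obtain ⟨N, hN⟩ := hp.2
    have := h N hN _ ((List.prefix_append_right_inj _).mpr ht) (k + 1) (by omega)
    rw [show k + 1 + 1 = k + 2 from rfl, List.count_append, List.count_append, hcount hN,
      hcount hN] at this
    omega
  · intro h N hN t ht j hj
    rcases List.prefix_or_prefix_of_prefix ht (List.prefix_append _ _) with ht' | ht'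
    · exact isBallot_partitionWord hp.1 N t ht' j hj
    obtain ⟨s, rfl⟩ := List.prefix_iff_exists_eq_append.mp ht'
    obtain ⟨k, rfl⟩ : ∃ k, j = k + 1 := ⟨j - 1, by omega⟩
    have := h k s ((List.prefix_append_right_inj _).mp ht)
    rw [show k + 1 + 1 = k + 2 from rfl, List.count_append, List.count_append, hcount hN,
      hcount hN]
    omega

theorem isDominant_iff_forall_occurrence {p : ℕ → ℕ} (hp : IsPartitionFun p) {w : List ℕ} :
    IsDominant p w ↔ ∀ k t r, w = t ++ (k + 2) :: r →
      t.count (k + 2) + 1 + p (k + 1) ≤ t.count (k + 1) + p k := by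
  rw [isDominant_iff_forall_prefix hp]
  refine forall_congr' fun k => ?_
  rw [forall_prefix_count_le_iff (by omega)]
  exact and_iff_right (hp.1 k (k + 1) (by omega))

end Words

section Cells

variable {α : Type*} [DecidableEq α] (lt : α → α → Prop) [DecidableRel lt] (f : α → ℕ)

def countBefore (S : Finset α) (x : α) (v : ℕ) : ℕ :=
  #{y ∈ S | lt y x ∧ f y = v}

/-- `p`-dominance of the word read off `S`, checked at each letter `k + 2`; note that `p k`, the
`(k + 1)`-st part, is the number of letters `k + 1` in `w(p)`. -/
def IsDominantOn (p : ℕ → ℕ) (S : Finset α) : Prop :=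
  ∀ k, ∀ x ∈ S, f x = k + 2 →
    countBefore lt f S x (k + 2) + 1 + p (k + 1) ≤ countBefore lt f S x (k + 1) + p k

variable {lt}

theorem count_map_eq_countBefore (hasymm : ∀ x y, lt x y → ¬ lt y x) {L t r : List α} {x : α}
    (hL : L.Pairwise lt) (hx : L = t ++ x :: r) (v : ℕ) :
    (t.map f).count v = countBefore lt f L.toFinset x v := by
  have : Std.Irrefl lt := ⟨fun a h => hasymm a a h h⟩
  have ht : t.Nodup := ((hx ▸ hL).sublist (List.sublist_append_left _ _)).nodup
  have hbefore : ∀ y, y ∈ t ↔ y ∈ L ∧ lt y x := by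
    subst hx
    have hsplit := List.pairwise_append.mp hL
    intro y
    constructor
    · exact fun hy => ⟨by simp [hy], hsplit.2.2 y hy x (by simp)⟩
    · rintro ⟨hy, hyx⟩
      rcases List.mem_append.mp hy with hy | hy
      · exact hy
      rcases List.mem_cons.mp hy with rfl | hy
      · exact absurd hyx (Std.Irrefl.irrefl _)
      · exact absurd hyx (hasymm _ _ ((List.pairwise_cons.mp hsplit.2.1).1 y hy))
  calc (t.map f).count v = t.countP (fun y => f y = v) := by
        rw [List.count_eq_countP, List.countP_map]; congr
    _ = countBefore lt f L.toFinset x v := by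
        rw [countBefore, ← ht.card_eq_countP]
        congr 1
        ext y
        simp [hbefore, and_assoc]

theorem isDominant_map_iff {p : ℕ → ℕ} (hp : IsPartitionFun p)
    (hasymm : ∀ x y, lt x y → ¬ lt y x) {L : List α} (hL : L.Pairwise lt) :
    IsDominant p (L.map f) ↔ IsDominantOn lt f p L.toFinset := by
  rw [isDominant_iff_forall_occurrence hp]
  constructor
  · intro h k x hx hfx
    obtain ⟨t, r, hL'⟩ := List.append_of_mem (List.mem_toFinset.mp hx)
    have := h k (t.map f) (r.map f) (by simp [hL', hfx])
    rwa [count_map_eq_countBefore f hasymm hL hL', count_map_eq_countBefore f hasymm hL hL'] at this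
  · intro h k t' r' hw
    obtain ⟨t, l, rfl, rfl, hl⟩ := List.map_eq_append_iff.mp hw
    obtain ⟨x, r, rfl, hfx, -⟩ := List.map_eq_cons_iff.mp hl
    rw [count_map_eq_countBefore f hasymm hL rfl, count_map_eq_countBefore f hasymm hL rfl]
    exact h k x (by simp) hfx

end Cells

section Orders

/-- `q` is read before `q'` in the reverse reading word. -/
def ReadingLT (q q' : ℕ × ℕ) : Prop :=
  q.1 < q'.1 ∨ q.1 = q'.1 ∧ q'.2 < q.2

/-- `q` is read before `q'` in the reverse column word. -/
def ColumnLT (q q' : ℕ × ℕ) : Prop :=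
  q'.2 < q.2 ∨ q.2 = q'.2 ∧ q.1 < q'.1

instance : DecidableRel ReadingLT := fun _ _ => inferInstanceAs (Decidable (_ ∨ _))

instance : DecidableRel ColumnLT := fun _ _ => inferInstanceAs (Decidable (_ ∨ _))

theorem readingLT_asymm (q q' : ℕ × ℕ) (h : ReadingLT q q') : ¬ ReadingLT q' q := by
  unfold ReadingLT at *; omega

theorem columnLT_asymm (q q' : ℕ × ℕ) (h : ColumnLT q q') : ¬ ColumnLT q' q := by
  unfold ColumnLT at *; omega

def readingCells (la nu : ℕ → ℕ) (R : ℕ) : List (ℕ × ℕ) :=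
  (List.range R).flatMap fun i =>
    (((List.range (nu i)).filter fun j => decide (la i ≤ j)).map fun j => (i, j)).reverse

def columnCells (la nu : ℕ → ℕ) (R C : ℕ) : List (ℕ × ℕ) :=
  ((List.range C).reverse).flatMap fun j =>
    ((List.range R).filter fun i => decide (la i ≤ j ∧ j < nu i)).map fun i => (i, j)

variable {la nu : ℕ → ℕ} {R C : ℕ}

theorem revReadingWord_eq_map (T : ℕ → ℕ → ℕ) :
    revReadingWord la nu T R = (readingCells la nu R).map (Function.uncurry T) := by
  simp [revReadingWord, readingCells, List.map_flatMap, List.map_reverse]; rfl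

theorem revColumnWord_eq_map (T : ℕ → ℕ → ℕ) :
    revColumnWord la nu T R C = (columnCells la nu R C).map (Function.uncurry T) := by
  simp [revColumnWord, columnCells, List.map_flatMap]; rfl

theorem mem_readingCells {i j : ℕ} :
    (i, j) ∈ readingCells la nu R ↔ i < R ∧ InSkewShape la nu i j := by
  simp [readingCells, InSkewShape, and_comm]

theorem mem_columnCells (hC : ∀ i, nu i ≤ C) {i j : ℕ} :
    (i, j) ∈ columnCells la nu R C ↔ i < R ∧ InSkewShape la nu i j := by
  simp only [columnCells, InSkewShape, List.mem_flatMap, List.mem_map, List.mem_filter,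
    List.mem_range, List.mem_reverse, Prod.mk.injEq, decide_eq_true_eq]
  constructor
  · rintro ⟨j, -, i, ⟨hi, hshape⟩, rfl, rfl⟩
    exact ⟨hi, hshape⟩
  · rintro ⟨hi, hla, hnu⟩
    exact ⟨j, (hnu.trans_le (hC i)), i, ⟨hi, hla, hnu⟩, rfl, rfl⟩

theorem pairwise_readingCells : (readingCells la nu R).Pairwise ReadingLT := by
  refine List.pairwise_flatMap.mpr ⟨fun i _ => ?_, List.pairwise_lt_range.imp fun hii' => ?_⟩
  · rw [List.pairwise_reverse, List.pairwise_map]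
    exact (List.pairwise_lt_range.filter _).imp fun hjj' => Or.inr ⟨rfl, hjj'⟩
  · simp only [List.mem_reverse, List.mem_map]
    rintro _ ⟨j, -, rfl⟩ _ ⟨j', -, rfl⟩
    exact Or.inl hii'

theorem pairwise_columnCells : (columnCells la nu R C).Pairwise ColumnLT := by
  refine List.pairwise_flatMap.mpr ⟨fun j _ => ?_, ?_⟩
  · rw [List.pairwise_map]
    exact (List.pairwise_lt_range.filter _).imp fun hii' => Or.inr ⟨rfl, hii'⟩
  · refine (List.pairwise_reverse.mpr List.pairwise_lt_range).imp fun hjj' => ?_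
    simp only [List.mem_map]
    rintro _ ⟨i, -, rfl⟩ _ ⟨i', -, rfl⟩
    exact Or.inl hjj'

end Orders

section Tableau

variable {la nu : ℕ → ℕ} {T : ℕ → ℕ → ℕ}

theorem IsSSST.col_lt (hla : Antitone la) (hnu : Antitone nu) (hT : IsSSST la nu T)
    {r r' c : ℕ} (hr : r < r') (h : InSkewShape la nu r c) (h' : InSkewShape la nu r' c) :
    T r c < T r' c := by
  induction r', hr using Nat.le_induction with
  | base => exact hT.2.2 r c h h'
  | succ n hn ih =>
    have hnc : InSkewShape la nu n c :=
      ⟨(hla (Nat.le_of_succ_le hn)).trans h.1, h'.2.trans_le (hnu (Nat.le_succ n))⟩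
    exact (ih hnc).trans (hT.2.2 n c hnc h')

theorem IsSSST.lt_of_lt_of_le (hla : Antitone la) (hnu : Antitone nu) (hT : IsSSST la nu T)
    {i j r c : ℕ} (hr : i < r) (hc : j ≤ c)
    (h : InSkewShape la nu i j) (h' : InSkewShape la nu r c) : T i j < T r c := by
  have hic : InSkewShape la nu i c := ⟨h.1.trans hc, h'.2.trans_le (hnu hr.le)⟩
  exact (hT.2.1 i j c h hic hc).trans_lt (IsSSST.col_lt hla hnu hT hr hic h')

theorem IsSSST.le_of_le_of_le (hla : Antitone la) (hnu : Antitone nu) (hT : IsSSST la nu T)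
    {i j r c : ℕ} (hr : i ≤ r) (hc : j ≤ c)
    (h : InSkewShape la nu i j) (h' : InSkewShape la nu r c) : T i j ≤ T r c := by
  rcases hr.lt_or_eq with hr | rfl
  · exact (IsSSST.lt_of_lt_of_le hla hnu hT hr hc h h').le
  · exact hT.2.1 i j c h h' hc

theorem IsSSST.eq_of_col_eq (hla : Antitone la) (hnu : Antitone nu) (hT : IsSSST la nu T)
    {r r' c : ℕ} (h : InSkewShape la nu r c) (h' : InSkewShape la nu r' c)
    (hTc : T r c = T r' c) : r = r' := by
  rcases lt_trichotomy r r' with hr | hr | hr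
  · exact absurd hTc (IsSSST.col_lt hla hnu hT hr h h').ne
  · exact hr
  · exact absurd hTc (IsSSST.col_lt hla hnu hT hr h' h).ne'

end Tableau

section Comparison

variable {la nu : ℕ → ℕ} {T : ℕ → ℕ → ℕ} {R : ℕ} {S : Finset (ℕ × ℕ)}

theorem exists_leftmost {i j v : ℕ} (hj : (i, j) ∈ S) (hTj : T i j = v) :
    ∃ a, (i, a) ∈ S ∧ T i a = v ∧ a ≤ j ∧ ∀ c, (i, c) ∈ S → T i c = v → a ≤ c := by
  classical
  have hex : ∃ a, (i, a) ∈ S ∧ T i a = v := ⟨j, hj, hTj⟩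
  exact ⟨Nat.find hex, (Nat.find_spec hex).1, (Nat.find_spec hex).2, Nat.find_min' hex ⟨hj, hTj⟩,
    fun c hc hTc => Nat.find_min' hex ⟨hc, hTc⟩⟩

theorem countBefore_columnLT_add_le (hS : ∀ r c, (r, c) ∈ S ↔ r < R ∧ InSkewShape la nu r c)
    (hla : Antitone la) (hnu : Antitone nu) (hT : IsSSST la nu T) {i a j v : ℕ}
    (ha : (i, a) ∈ S) (hj : (i, j) ∈ S) (hTa : T i a = v) (hTj : T i j = v) (haj : a ≤ j) :
    countBefore ColumnLT (Function.uncurry T) S (i, j) v + (j - a) ≤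
      countBefore ReadingLT (Function.uncurry T) S (i, a) v := by
  obtain ⟨hi, hij⟩ := (hS _ _).mp hj
  obtain ⟨-, hia⟩ := (hS _ _).mp ha
  set B := (Ioc a j).image fun c => (i, c)
  have hdisj : Disjoint {y ∈ S | ColumnLT y (i, j) ∧ Function.uncurry T y = v} B := by
    simp only [disjoint_left, mem_filter, mem_image, mem_Ioc, B]
    rintro _ ⟨-, hlt, -⟩ ⟨c, ⟨-, hcj⟩, rfl⟩
    simp only [ColumnLT] at hlt
    omega
  have hsub : {y ∈ S | ColumnLT y (i, j) ∧ Function.uncurry T y = v} ∪ B ⊆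
      {y ∈ S | ReadingLT y (i, a) ∧ Function.uncurry T y = v} := by
    intro y hy
    rcases mem_union.mp hy with hy | hy
    · rw [mem_filter] at hy ⊢
      obtain ⟨hyS, hlt, hTy⟩ := hy
      obtain ⟨r, c⟩ := y
      simp only [ColumnLT, ReadingLT, Function.uncurry_apply_pair] at hlt hTy ⊢
      refine ⟨hyS, ?_, hTy⟩
      rcases lt_trichotomy r i with hr | rfl | hr
      · exact Or.inl hr
      · omega
      · have := IsSSST.lt_of_lt_of_le hla hnu hT hr (by omega) hij ((hS _ _).mp hyS).2
        omega
    · simp only [B, mem_image, mem_Ioc] at hy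
      obtain ⟨c, ⟨hac, hcj⟩, rfl⟩ := hy
      have hic : InSkewShape la nu i c := ⟨hia.1.trans hac.le, hcj.trans_lt hij.2⟩
      have := hT.2.1 i a c hia hic hac.le
      have := hT.2.1 i c j hic hij hcj
      refine mem_filter.mpr ⟨(hS _ _).mpr ⟨hi, hic⟩, Or.inr ⟨rfl, hac⟩, ?_⟩
      simp only [Function.uncurry_apply_pair]
      omega
  calc countBefore ColumnLT (Function.uncurry T) S (i, j) v + (j - a)
      = #({y ∈ S | ColumnLT y (i, j) ∧ Function.uncurry T y = v} ∪ B) := by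
        rw [card_union_of_disjoint hdisj, card_image_of_injective _ (Prod.mk_right_injective i),
          Nat.card_Ioc, countBefore]
    _ ≤ countBefore ReadingLT (Function.uncurry T) S (i, a) v := card_le_card hsub

theorem countBefore_readingLT_le (hS : ∀ r c, (r, c) ∈ S ↔ r < R ∧ InSkewShape la nu r c)
    (hla : Antitone la) (hnu : Antitone nu) (hT : IsSSST la nu T) {i a j v : ℕ}
    (ha : (i, a) ∈ S) (hTa : T i a = v + 1)
    (hmin : ∀ c, (i, c) ∈ S → T i c = v + 1 → a ≤ c) :
    countBefore ReadingLT (Function.uncurry T) S (i, a) v ≤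
      countBefore ColumnLT (Function.uncurry T) S (i, j) v + (j - a) := by
  obtain ⟨hi, hia⟩ := (hS _ _).mp ha
  set D := {y ∈ S | Function.uncurry T y = v ∧ y.2 ∈ Ico a j}
  have hD : #D ≤ j - a := by
    rw [← Nat.card_Ico]
    refine card_le_card_of_injOn Prod.snd (fun y hy => (mem_filter.mp hy).2.2) ?_
    rintro ⟨r, c⟩ hy ⟨r', c'⟩ hy' (rfl : c = c')
    simp only [D, mem_coe, mem_filter, Function.uncurry_apply_pair] at hy hy'
    obtain rfl := IsSSST.eq_of_col_eq hla hnu hT ((hS _ _).mp hy.1).2 ((hS _ _).mp hy'.1).2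
      (hy.2.1.trans hy'.2.1.symm)
    rfl
  have hsub : {y ∈ S | ReadingLT y (i, a) ∧ Function.uncurry T y = v} ⊆
      {y ∈ S | ColumnLT y (i, j) ∧ Function.uncurry T y = v} ∪ D := by
    intro y hy
    rw [mem_filter] at hy
    rw [mem_union, mem_filter, mem_filter, mem_Ico]
    obtain ⟨hyS, hlt, hTy⟩ := hy
    obtain ⟨r, c⟩ := y
    simp only [ColumnLT, ReadingLT, Function.uncurry_apply_pair] at hlt hTy ⊢
    have hrc := ((hS _ _).mp hyS).2
    have hri : r < i := by
      rcases hlt with hr | ⟨rfl, hac⟩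
      · exact hr
      · have := hT.2.1 r a c hia hrc hac.le
        omega
    have hac : a ≤ c := by
      by_contra! hca
      have hic : InSkewShape la nu i c := ⟨(hla hri.le).trans hrc.1, hca.trans hia.2⟩
      have := IsSSST.col_lt hla hnu hT hri hrc hic
      have := hT.2.1 i c a hic hia hca.le
      have := hmin c ((hS _ _).mpr ⟨hi, hic⟩) (by omega)
      omega
    rcases le_or_gt j c with hjc | hcj
    · exact Or.inl ⟨hyS, by omega, hTy⟩
    · exact Or.inr ⟨hyS, hTy, hac, hcj⟩
  calc countBefore ReadingLT (Function.uncurry T) S (i, a) v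
      ≤ #({y ∈ S | ColumnLT y (i, j) ∧ Function.uncurry T y = v} ∪ D) := card_le_card hsub
    _ ≤ countBefore ColumnLT (Function.uncurry T) S (i, j) v + (j - a) :=
        (card_union_le _ _).trans (Nat.add_le_add_left hD _)

theorem countBefore_readingLT_le_columnLT
    (hS : ∀ r c, (r, c) ∈ S ↔ r < R ∧ InSkewShape la nu r c)
    (hla : Antitone la) (hnu : Antitone nu) (hT : IsSSST la nu T) {i c v : ℕ}
    (hc : (i, c) ∈ S) (hTc : T i c = v) :
    countBefore ReadingLT (Function.uncurry T) S (i, c) v ≤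
      countBefore ColumnLT (Function.uncurry T) S (i, c) v := by
  refine card_le_card fun y hy => ?_
  rw [mem_filter] at hy ⊢
  obtain ⟨hyS, hlt, hTy⟩ := hy
  obtain ⟨r, c'⟩ := y
  simp only [ColumnLT, ReadingLT, Function.uncurry_apply_pair] at hlt hTy ⊢
  refine ⟨hyS, ?_, hTy⟩
  rcases hlt with hr | ⟨rfl, hcc'⟩
  · by_contra! hc'
    have := IsSSST.lt_of_lt_of_le hla hnu hT hr (by omega) ((hS _ _).mp hyS).2 ((hS _ _).mp hc).2
    omega
  · exact Or.inl hcc'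

theorem countBefore_columnLT_le_readingLT
    (hS : ∀ r c, (r, c) ∈ S ↔ r < R ∧ InSkewShape la nu r c)
    (hla : Antitone la) (hnu : Antitone nu) (hT : IsSSST la nu T) {i c v : ℕ}
    (hc : (i, c) ∈ S) (hTc : T i c = v + 1) :
    countBefore ColumnLT (Function.uncurry T) S (i, c) v ≤
      countBefore ReadingLT (Function.uncurry T) S (i, c) v := by
  refine card_le_card fun y hy => ?_
  rw [mem_filter] at hy ⊢
  obtain ⟨hyS, hlt, hTy⟩ := hy
  obtain ⟨r, c'⟩ := y
  simp only [ColumnLT, ReadingLT, Function.uncurry_apply_pair] at hlt hTy ⊢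
  refine ⟨hyS, Or.inl ?_, hTy⟩
  by_contra! hir
  have := IsSSST.le_of_le_of_le hla hnu hT hir (by omega) ((hS _ _).mp hc).2 ((hS _ _).mp hyS).2
  omega

theorem isDominantOn_readingLT_iff_columnLT
    (hS : ∀ r c, (r, c) ∈ S ↔ r < R ∧ InSkewShape la nu r c)
    (hla : Antitone la) (hnu : Antitone nu) (hT : IsSSST la nu T) (p : ℕ → ℕ) :
    IsDominantOn ReadingLT (Function.uncurry T) p S ↔
      IsDominantOn ColumnLT (Function.uncurry T) p S := by
  constructor
  · rintro h k ⟨i, j⟩ hj hTj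
    obtain ⟨a, ha, hTa, haj, hmin⟩ := exists_leftmost hj hTj
    have hread := h k (i, a) ha hTa
    have hnext : countBefore ColumnLT (Function.uncurry T) S (i, j) (k + 2) + (j - a) ≤
        countBefore ReadingLT (Function.uncurry T) S (i, a) (k + 2) :=
      countBefore_columnLT_add_le hS hla hnu hT ha hj hTa hTj haj
    have hcur : countBefore ReadingLT (Function.uncurry T) S (i, a) (k + 1) ≤
        countBefore ColumnLT (Function.uncurry T) S (i, j) (k + 1) + (j - a) :=
      countBefore_readingLT_le hS hla hnu hT ha hTa hmin
    omega
  · rintro h k ⟨i, c⟩ hc hTc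
    have hcol := h k (i, c) hc hTc
    have hnext := countBefore_readingLT_le_columnLT hS hla hnu hT hc hTc
    have hcur : countBefore ColumnLT (Function.uncurry T) S (i, c) (k + 1) ≤
        countBefore ReadingLT (Function.uncurry T) S (i, c) (k + 1) :=
      countBefore_columnLT_le_readingLT hS hla hnu hT hc hTc
    omega

end Comparison

end SkewTableau

open SkewTableau

theorem stmt_19_general (la nu p : ℕ → ℕ)
    (hla : IsPartitionFun la) (hnu : IsPartitionFun nu) (hp : IsPartitionFun p)
    (T : ℕ → ℕ → ℕ) (hT : IsSSST la nu T)
    (R C : ℕ) (hC : ∀ i : ℕ, nu i ≤ C) :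
    IsDominant p (revReadingWord la nu T R) ↔
      IsDominant p (revColumnWord la nu T R C) := by
  have hcells : (columnCells la nu R C).toFinset = (readingCells la nu R).toFinset := by
    ext ⟨i, j⟩
    simp only [List.mem_toFinset, mem_readingCells, mem_columnCells hC]
  rw [revReadingWord_eq_map, revColumnWord_eq_map,
    isDominant_map_iff _ hp readingLT_asymm pairwise_readingCells,
    isDominant_map_iff _ hp columnLT_asymm pairwise_columnCells, hcells]
  exact isDominantOn_readingLT_iff_columnLT
    (fun r c => by rw [List.mem_toFinset, mem_readingCells]) hla.1 hnu.1 hT p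

/-- Let `T` be a semi-standard skew tableau of shape `ν/λ` and `p` a partition.  Then
the reverse reading word of `T` is `p`-dominant if and only if the reverse column word
of `T` is `p`-dominant. -/
theorem stmt_19 (la nu p : ℕ → ℕ)
    (hla : IsPartitionFun la) (hnu : IsPartitionFun nu) (hp : IsPartitionFun p)
    (hsub : ∀ i : ℕ, la i ≤ nu i)
    (T : ℕ → ℕ → ℕ) (hT : IsSSST la nu T)
    (R C : ℕ) (hR : ∀ i : ℕ, R ≤ i → nu i = 0) (hC : ∀ i : ℕ, nu i ≤ C) :
    IsDominant p (revReadingWord la nu T R) ↔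
      IsDominant p (revColumnWord la nu T R C) :=
  stmt_19_general la nu p hla hnu hp T hT R C hC
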